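/- There exist 3×3 row-stochastic matrices P and Q that commute (P * Q = Q * P) but fail the cardinality condition: there exist indices i, k with |{j : q_{kj} p_{ji} ≠ 0}| ≠ |{j : p_{kj} q_{ji} ≠ 0}|. Concretely, P with all entries 1/3 and Q = [[1/2,0,1/2],[1/4,1/2,1/4],[1/4,1/2,1/4]] witness this. -/

import Mathlib

/-- A row-stochastic matrix: nonnegative entries, each row sums to 1. -/
def IsRowStochastic {ι : Type*} [Fintype ι] (p : Matrix ι ι ℝ) : Prop :=
  (∀ i j, 0 ≤ p i j) ∧ ∀ i, ∑ j, p i j = 1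

/-!
The uniform matrix `J / 3` commutes with every doubly stochastic matrix, and since its entries
never vanish, the two counts in the cardinality condition at `(i, k)` are the number of nonzero
entries in row `k` and in column `i` of `Q`. The given `Q` is doubly stochastic and has a zero in
row `0` but none in column `0`.
-/

open Matrix

section ConstantMatrix

variable {ι α : Type*}

theorem isRowStochastic_const_inv_card [Fintype ι] [Nonempty ι] :
    IsRowStochastic (of fun _ _ : ι => (1 : ℝ) / Fintype.card ι) :=
  ⟨fun _ _ => by rw [of_apply]; positivity, fun _ => by simp [Finset.card_univ]⟩

theorem const_mul_comm_of_sums_eq_one [Fintype ι] [Semiring α] (c : α) {Q : Matrix ι ι α}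
    (hrow : ∀ i, ∑ j, Q i j = 1) (hcol : ∀ j, ∑ i, Q i j = 1) :
    of (fun _ _ => c) * Q = Q * of fun _ _ => c := by
  ext i j
  simp [mul_apply, ← Finset.mul_sum, ← Finset.sum_mul, hrow, hcol]

variable [MulZeroClass α] [NoZeroDivisors α] {c : α}

theorem setOf_mul_const_apply_ne_zero (hc : c ≠ 0) (Q : Matrix ι ι α) (i k : ι) :
    {j | Q k j * of (fun _ _ => c) j i ≠ 0} = {j | Q k j ≠ 0} := by
  simp [hc]

theorem setOf_const_apply_mul_ne_zero (hc : c ≠ 0) (Q : Matrix ι ι α) (i k : ι) :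
    {j | of (fun _ _ => c) k j * Q j i ≠ 0} = {j | Q j i ≠ 0} := by
  simp [hc]

end ConstantMatrix

noncomputable def Q₀ : Matrix (Fin 3) (Fin 3) ℝ :=
  of ![![1/2, 0, 1/2], ![1/4, 1/2, 1/4], ![1/4, 1/2, 1/4]]

theorem isRowStochastic_Q₀ : IsRowStochastic Q₀ := by
  refine ⟨fun i j => ?_, fun i => ?_⟩
  · fin_cases i <;> fin_cases j <;> norm_num [Q₀]
  · fin_cases i <;> norm_num [Q₀, Fin.sum_univ_three, cons_val_two]

theorem sum_Q₀_col (j : Fin 3) : ∑ i, Q₀ i j = 1 := by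
  fin_cases j <;> norm_num [Q₀, Fin.sum_univ_three, cons_val_two]

theorem ncard_setOf_Q₀_row_zero_ne_zero : {j | Q₀ 0 j ≠ 0}.ncard = 2 := by
  have hsupp : {j | Q₀ 0 j ≠ 0} = {0, 2} := by
    ext j; fin_cases j <;> simp [Q₀]
  rw [hsupp, Set.ncard_pair (by decide)]

theorem ncard_setOf_Q₀_col_zero_ne_zero : {j | Q₀ j 0 ≠ 0}.ncard = 3 := by
  have hsupp : {j | Q₀ j 0 ≠ 0} = Set.univ := by
    ext j; fin_cases j <;> simp [Q₀]
  rw [hsupp, Set.ncard_univ, Nat.card_fin]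

/-- There exist commuting 3×3 row-stochastic matrices which fail the cardinality criterion for
strong commutation; concretely, `P` with all entries `1/3` and
`Q = [[1/2,0,1/2],[1/4,1/2,1/4],[1/4,1/2,1/4]]` witness this. -/
theorem exists_commuting_stochastic_not_strongly_commuting :
    ∃ P Q : Matrix (Fin 3) (Fin 3) ℝ,
      P = Matrix.of (fun _ _ => (1 : ℝ) / 3) ∧
      Q = Matrix.of ![![1/2, 0, 1/2], ![1/4, 1/2, 1/4], ![1/4, 1/2, 1/4]] ∧
      IsRowStochastic P ∧ IsRowStochastic Q ∧ P * Q = Q * P ∧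
      ∃ i k : Fin 3,
        ({j | Q k j * P j i ≠ 0} : Set (Fin 3)).ncard ≠
        ({j | P k j * Q j i ≠ 0} : Set (Fin 3)).ncard := by
  have hP : IsRowStochastic (of fun _ _ : Fin 3 => (1 : ℝ) / 3) := by
    simpa using isRowStochastic_const_inv_card (ι := Fin 3)
  refine ⟨_, Q₀, rfl, rfl, hP, isRowStochastic_Q₀,
    const_mul_comm_of_sums_eq_one _ isRowStochastic_Q₀.2 sum_Q₀_col, 0, 0, ?_⟩
  rw [setOf_mul_const_apply_ne_zero (by norm_num), setOf_const_apply_mul_ne_zero (by norm_num),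
    ncard_setOf_Q₀_row_zero_ne_zero, ncard_setOf_Q₀_col_zero_ne_zero]
  decide
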